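/- arXiv:1107.1856 — 2 statements merged into one kernel-verified Lean document; each statement's English description precedes it below -/
import Mathlib

section
/- For the Kac operator with uniform scattering density ρ = 1/(2π) on N particles, the function F(v) = Σ_{j=1}^N (v_j⁴ − 3N/(N+2)) on S^{N−1}(√N) satisfies L_N F = (1/2)(N+2)/(N−1) · F, where L_N = N(I − Q_N). -/
/-- The Kac rotation `R_{i,j,θ}` acting on velocities in `ℝ^N`. -/
noncomputable def kacRot (N : ℕ) (i j : Fin N) (θ : ℝ)
    (v : EuclideanSpace ℝ (Fin N)) : EuclideanSpace ℝ (Fin N) :=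
  WithLp.toLp 2 fun m =>
    if m = i then Real.cos θ * v i - Real.sin θ * v j
    else if m = j then Real.sin θ * v i + Real.cos θ * v j
    else v m

/-- The Kac operator `Q_N` with uniform scattering density `ρ = 1/(2π)`. -/
noncomputable def kacQ (N : ℕ) (F : EuclideanSpace ℝ (Fin N) → ℝ)
    (v : EuclideanSpace ℝ (Fin N)) : ℝ :=
  ((N.choose 2 : ℝ))⁻¹ *
    ∑ p ∈ Finset.univ.filter (fun p : Fin N × Fin N => p.1 < p.2),
      (2 * Real.pi)⁻¹ * ∫ θ in (-Real.pi)..Real.pi, F (kacRot N p.1 p.2 θ v)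

/-!
Under a rotation `R_{i,j,θ}` only the two terms `v_i⁴ + v_j⁴` of `F` move, and their `θ`-average
is `(3/4)(v_i⁴ + v_j⁴) + (3/2) v_i² v_j²`. Summing over pairs, `Σ_{i<j} (v_i⁴ + v_j⁴) = (N-1) Σ v⁴`
and `2 Σ_{i<j} v_i² v_j² = (Σ v²)² - Σ v⁴ = N² - Σ v⁴` on the sphere, so `(I - Q_N) F` is an affine
function of `Σ v⁴`; the constant `3N/(N+2)` is exactly the one making it proportional to `F`.
-/

open Real Finset

section PairSums

variable {ι : Type*} [Fintype ι] [LinearOrder ι]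

theorem two_nsmul_sum_filter_lt_add_sum_diag {M : Type*} [AddCommMonoid M] (f : ι → ι → M)
    (hf : ∀ i j, f i j = f j i) :
    2 • ∑ p ∈ univ.filter (fun p : ι × ι => p.1 < p.2), f p.1 p.2 + ∑ i, f i i
      = ∑ i, ∑ j, f i j := by
  have split (i j : ι) : f i j = (if i < j then f i j else 0) + (if j < i then f j i else 0)
      + (if i = j then f i i else 0) := by
    rcases lt_trichotomy i j with h | rfl | h
    · simp [h, h.not_gt, h.ne]
    · simp
    · simp [h, h.not_gt, h.ne', hf i j]
  have upper : ∑ i, ∑ j, (if i < j then f i j else 0)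
      = ∑ p ∈ univ.filter (fun p : ι × ι => p.1 < p.2), f p.1 p.2 := by
    rw [sum_filter, Fintype.sum_prod_type]
  rw [sum_congr rfl fun i _ => sum_congr rfl fun j _ => split i j]
  simp only [sum_add_distrib]
  rw [upper, sum_comm (f := fun i j => if j < i then f j i else 0), upper]
  simp [two_nsmul]

theorem sum_filter_lt_add (g : ι → ℝ) :
    ∑ p ∈ univ.filter (fun p : ι × ι => p.1 < p.2), (g p.1 + g p.2)
      = (Fintype.card ι - 1) * ∑ i, g i := by
  have h := two_nsmul_sum_filter_lt_add_sum_diag (fun i j => g i + g j) fun i j => add_comm _ _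
  simp only [sum_add_distrib, sum_const, card_univ, nsmul_eq_mul, ← mul_sum] at h
  push_cast at h
  rw [sum_add_distrib]
  linarith

theorem two_mul_sum_filter_lt_mul {R : Type*} [CommRing R] (x : ι → R) :
    2 * ∑ p ∈ univ.filter (fun p : ι × ι => p.1 < p.2), x p.1 * x p.2
      = (∑ i, x i) ^ 2 - ∑ i, x i ^ 2 := by
  have h := two_nsmul_sum_filter_lt_add_sum_diag (fun i j => x i * x j) fun i j => mul_comm _ _
  rw [sq, sum_mul_sum, ← h, two_nsmul, two_mul]
  simp only [sq]
  abel

end PairSums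

/- With `z = a + b i` the rotated pair `(X, Y)` is `e^{iθ} z`, and
`X⁴ + Y⁴ = (3 |z|⁴ + Re (e^{4iθ} z⁴)) / 4`. -/
theorem rot_pow_four_add_rot_pow_four (a b θ : ℝ) :
    (cos θ * a - sin θ * b) ^ 4 + (sin θ * a + cos θ * b) ^ 4
      = 3 / 4 * (a ^ 4 + b ^ 4) + 3 / 2 * (a ^ 2 * b ^ 2)
        + ((a ^ 4 - 6 * a ^ 2 * b ^ 2 + b ^ 4) * cos (4 * θ)
          - 4 * (a ^ 3 * b - a * b ^ 3) * sin (4 * θ)) / 4 := by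
  have h4 : 4 * θ = 2 * (2 * θ) := by ring
  simp only [h4, cos_two_mul', sin_two_mul]
  linear_combination
    (3 / 4) * (a ^ 2 + b ^ 2) ^ 2 * (sin θ ^ 2 + cos θ ^ 2 + 1) * sin_sq_add_cos_sq θ

theorem integral_cos_nat_mul {n : ℕ} (hn : n ≠ 0) : ∫ θ in (-π)..π, cos (n * θ) = 0 := by
  have : (n : ℝ) ≠ 0 := by exact_mod_cast hn
  simp [intervalIntegral.integral_comp_mul_left (fun x => cos x) this, sin_nat_mul_pi]

theorem integral_sin_nat_mul (n : ℕ) : ∫ θ in (-π)..π, sin (n * θ) = 0 := by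
  rcases eq_or_ne n 0 with rfl | hn
  · simp
  have : (n : ℝ) ≠ 0 := by exact_mod_cast hn
  simp [intervalIntegral.integral_comp_mul_left (fun x => sin x) this]

theorem integral_rot_pow_four_add_rot_pow_four (a b : ℝ) :
    (2 * π)⁻¹ * ∫ θ in (-π)..π, ((cos θ * a - sin θ * b) ^ 4 + (sin θ * a + cos θ * b) ^ 4)
      = 3 / 4 * (a ^ 4 + b ^ 4) + 3 / 2 * (a ^ 2 * b ^ 2) := by
  have hc := integral_cos_nat_mul (n := 4) (by norm_num)
  have hs := integral_sin_nat_mul 4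
  push_cast at hc hs
  simp_rw [rot_pow_four_add_rot_pow_four]
  rw [intervalIntegral.integral_add, intervalIntegral.integral_div, intervalIntegral.integral_sub,
    intervalIntegral.integral_const_mul, intervalIntegral.integral_const_mul, hc, hs]
  · rw [intervalIntegral.integral_const, smul_eq_mul]
    field_simp
    ring
  all_goals exact (by fun_prop : Continuous _).intervalIntegrable _ _

theorem sum_comp_kacRot {M : Type*} [AddCommGroup M] {N : ℕ} {i j : Fin N} (hij : i ≠ j)
    (θ : ℝ) (v : EuclideanSpace ℝ (Fin N)) (g : ℝ → M) :
    ∑ m, g (kacRot N i j θ v m)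
      = ∑ m, g (v m) - g (v i) - g (v j)
        + g (cos θ * v i - sin θ * v j) + g (sin θ * v i + cos θ * v j) := by
  have change : ∑ m, (g (kacRot N i j θ v m) - g (v m))
      = (g (cos θ * v i - sin θ * v j) - g (v i)) + (g (sin θ * v i + cos θ * v j) - g (v j)) := by
    rw [Fintype.sum_eq_add i j hij fun m hm => by simp [kacRot, hm.1, hm.2]]
    simp [kacRot, hij.symm]
  rw [sum_sub_distrib] at change
  rw [← sub_add_cancel (∑ m, g (kacRot N i j θ v m)) (∑ m, g (v m)), change]
  abel

theorem kac_average_sum_pow_four_sub {N : ℕ} {i j : Fin N} (hij : i ≠ j)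
    (v : EuclideanSpace ℝ (Fin N)) (c : ℝ) :
    (2 * π)⁻¹ * ∫ θ in (-π)..π, ∑ m, ((kacRot N i j θ v m) ^ 4 - c)
      = ∑ m, ((v m) ^ 4 - c) - 1 / 4 * ((v i) ^ 4 + (v j) ^ 4)
        + 3 / 2 * ((v i) ^ 2 * (v j) ^ 2) := by
  have integrand (θ : ℝ) : ∑ m, ((kacRot N i j θ v m) ^ 4 - c)
      = (∑ m, ((v m) ^ 4 - c) - (v i) ^ 4 - (v j) ^ 4)
        + ((cos θ * v i - sin θ * v j) ^ 4 + (sin θ * v i + cos θ * v j) ^ 4) := by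
    rw [sum_comp_kacRot hij θ v fun x => x ^ 4 - c]
    ring
  simp_rw [integrand]
  rw [intervalIntegral.integral_add intervalIntegrable_const
    ((by fun_prop : Continuous _).intervalIntegrable _ _), mul_add,
    integral_rot_pow_four_add_rot_pow_four, intervalIntegral.integral_const, smul_eq_mul]
  field_simp
  ring

theorem kacQ_sum_pow_four_sub {N : ℕ} (hN : 2 ≤ N) (v : EuclideanSpace ℝ (Fin N)) (c : ℝ) :
    kacQ N (fun w => ∑ m, ((w m) ^ 4 - c)) v
      = ∑ m, ((v m) ^ 4 - c)
        - ((N - 1) / 4 * ∑ m, (v m) ^ 4 - 3 / 4 * ((∑ m, (v m) ^ 2) ^ 2 - ∑ m, (v m) ^ 4))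
          / N.choose 2 := by
  have hcard : (univ.filter fun p : Fin N × Fin N => p.1 < p.2).card = N.choose 2 := by
    simpa using card_product_filter_lt (s := (univ : Finset (Fin N)))
  have hchoose : (N.choose 2 : ℝ) ≠ 0 := by exact_mod_cast (Nat.choose_pos hN).ne'
  have hcross : ∑ p ∈ univ.filter (fun p : Fin N × Fin N => p.1 < p.2), (v p.1) ^ 2 * (v p.2) ^ 2
      = ((∑ m, (v m) ^ 2) ^ 2 - ∑ m, (v m) ^ 4) / 2 := by
    have h := two_mul_sum_filter_lt_mul fun m => (v m) ^ 2
    simp only [← pow_mul] at h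
    linarith
  rw [kacQ, sum_congr rfl fun p hp => kac_average_sum_pow_four_sub (mem_filter.1 hp).2.ne v c,
    sum_add_distrib, sum_sub_distrib, sum_const, ← mul_sum, ← mul_sum, sum_filter_lt_add
      (fun m => (v m) ^ 4), hcard, nsmul_eq_mul, Fintype.card_fin, hcross]
  field_simp
  ring

/-- On the sphere `Σ v_j² = N`, the function `F(v) = Σ_j (v_j⁴ - 3N/(N+2))` is an
eigenfunction of `L_N = N(I - Q_N)` with eigenvalue `(1/2)(N+2)/(N-1)`. -/
theorem kac_gap_eigenfunction (N : ℕ) (hN : 2 ≤ N)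
    (v : EuclideanSpace ℝ (Fin N)) (hv : ∑ j, (v j) ^ 2 = (N : ℝ))
    (F : EuclideanSpace ℝ (Fin N) → ℝ)
    (hF : F = fun w => ∑ j, ((w j) ^ 4 - 3 * (N : ℝ) / ((N : ℝ) + 2))) :
    (N : ℝ) * (F v - kacQ N F v)
      = (1 / 2) * (((N : ℝ) + 2) / ((N : ℝ) - 1)) * F v := by
  subst hF
  have hN1 : (N : ℝ) - 1 ≠ 0 := sub_ne_zero.2 (Nat.cast_ne_one.2 (by omega))
  rw [kacQ_sum_pow_four_sub hN, hv, Nat.cast_choose_two]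
  simp only [sum_sub_distrib, sum_const, card_univ, Fintype.card_fin, nsmul_eq_mul]
  field_simp
  ring
end

section
/- For any even probability density ρ on [−π, π], the eigenfunction F(v) = Σ_j (v_j⁴ − 3N/(N+2)) of the Kac operator L_N has eigenvalue Γ_N = (1/4)(N+2)/(N−1) · Γ₂ where Γ₂ = 2∫_{−π}^{π}(1 − cos 4θ) ρ(θ) dθ; in particular the spectral gap satisfies Δ_N ≤ (1/4)(N+2)/(N−1) Γ₂. -/
/-! A Kac rotation in the `(i, j)`-plane changes `F` only through `v_i⁴ + v_j⁴`. Averaged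
against an even `ρ`, `(cos θ a - sin θ b)⁴ + (sin θ a + cos θ b)⁴` loses its `sin 4θ` term
and becomes `a⁴ + b⁴ + Γ₂/8 · (6a²b² - a⁴ - b⁴)`. Summed over the pairs, the correction is
`3 (Σ v_j²)² - (N + 2) Σ v_j⁴`, which on the sphere `Σ v_j² = N` equals `-(N + 2) F(v)`;
hence `L_N F = Γ_N F` there, and testing the spectral-gap inequality with `F` gives
`Δ ≤ Γ_N`. -/

open MeasureTheory

/-- The Kac operator `Q_N` built from the scattering density `ρ`. -/
noncomputable def kacQrho (N : ℕ) (ρ : ℝ → ℝ) (F : EuclideanSpace ℝ (Fin N) → ℝ)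
    (v : EuclideanSpace ℝ (Fin N)) : ℝ :=
  ((N.choose 2 : ℝ))⁻¹ *
    ∑ p ∈ Finset.univ.filter (fun p : Fin N × Fin N => p.1 < p.2),
      ∫ θ in (-Real.pi)..Real.pi, ρ θ * F (kacRot N p.1 p.2 θ v)

open Finset Real

theorem rotation_pow_four_add_pow_four (a b θ : ℝ) :
    (cos θ * a - sin θ * b) ^ 4 + (sin θ * a + cos θ * b) ^ 4
      = a ^ 4 + b ^ 4 + (1 - cos (4 * θ)) / 4 * (6 * a ^ 2 * b ^ 2 - a ^ 4 - b ^ 4)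
        - sin (4 * θ) * ((a ^ 2 - b ^ 2) * a * b) := by
  have h4 : 4 * θ = 2 * (2 * θ) := by ring
  have hcos : cos (4 * θ) = 2 * (2 * cos θ ^ 2 - 1) ^ 2 - 1 := by
    rw [h4, cos_two_mul, cos_two_mul]
  have hsin : sin (4 * θ) = 2 * (2 * sin θ * cos θ) * (2 * cos θ ^ 2 - 1) := by
    rw [h4, sin_two_mul, sin_two_mul, cos_two_mul]
  rw [hcos, hsin]
  set s := sin θ
  set c := cos θ
  linear_combination (b ^ 4 * (1 - c ^ 2 + s ^ 2) - 4 * a * b ^ 3 * s * c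
    + 12 * a ^ 2 * b ^ 2 * c ^ 2 + 4 * a ^ 3 * b * s * c + a ^ 4 * (1 - c ^ 2 + s ^ 2))
    * sin_sq_add_cos_sq θ

theorem intervalIntegral.integral_eq_zero_of_odd {f : ℝ → ℝ} (hf : Function.Odd f) (T : ℝ) :
    ∫ x in -T..T, f x = 0 := by
  have h := intervalIntegral.integral_comp_neg (a := -T) (b := T) f
  simp only [hf _, intervalIntegral.integral_neg, neg_neg] at h
  linarith

theorem integral_mul_rotation_pow_four_add_pow_four {ρ : ℝ → ℝ} (hρ : Function.Even ρ) {T : ℝ}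
    (hρT : IntervalIntegrable ρ volume (-T) T) (a b : ℝ) :
    ∫ θ in -T..T, ρ θ * ((cos θ * a - sin θ * b) ^ 4 + (sin θ * a + cos θ * b) ^ 4)
      = (∫ θ in -T..T, ρ θ) * (a ^ 4 + b ^ 4)
        + (∫ θ in -T..T, (1 - cos (4 * θ)) * ρ θ) / 4
          * (6 * a ^ 2 * b ^ 2 - a ^ 4 - b ^ 4) := by
  have hcos : IntervalIntegrable (fun θ => (1 - cos (4 * θ)) * ρ θ) volume (-T) T :=
    hρT.continuousOn_mul (by fun_prop)
  have hsin : IntervalIntegrable (fun θ => ρ θ * sin (4 * θ)) volume (-T) T :=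
    hρT.mul_continuousOn (by fun_prop)
  have hsin_odd : ∫ θ in -T..T, ρ θ * sin (4 * θ) = 0 :=
    intervalIntegral.integral_eq_zero_of_odd (fun θ => by simp [hρ θ, mul_neg]) T
  simp_rw [rotation_pow_four_add_pow_four]
  have hpt : ∀ θ, ρ θ * (a ^ 4 + b ^ 4
        + (1 - cos (4 * θ)) / 4 * (6 * a ^ 2 * b ^ 2 - a ^ 4 - b ^ 4)
        - sin (4 * θ) * ((a ^ 2 - b ^ 2) * a * b))
      = ρ θ * (a ^ 4 + b ^ 4)
        + (1 - cos (4 * θ)) * ρ θ * ((6 * a ^ 2 * b ^ 2 - a ^ 4 - b ^ 4) / 4)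
        - ρ θ * sin (4 * θ) * ((a ^ 2 - b ^ 2) * a * b) := fun θ => by ring
  simp_rw [hpt]
  rw [intervalIntegral.integral_sub ((hρT.mul_const _).add (hcos.mul_const _))
      (hsin.mul_const _),
    intervalIntegral.integral_add (hρT.mul_const _) (hcos.mul_const _),
    intervalIntegral.integral_mul_const, intervalIntegral.integral_mul_const,
    intervalIntegral.integral_mul_const, hsin_odd]
  ring

theorem two_mul_sum_filter_lt_of_symm {ι R : Type*} [Fintype ι] [LinearOrder ι] [CommRing R]
    (φ : ι → ι → R) (hφ : ∀ i j, φ i j = φ j i) :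
    2 * ∑ p ∈ univ.filter (fun p : ι × ι => p.1 < p.2), φ p.1 p.2
      = ∑ i, ∑ j, φ i j - ∑ i, φ i i := by
  have hsplit : ∀ i j, φ i j = (if i < j then φ i j else 0) + (if j < i then φ j i else 0)
      + (if i = j then φ i j else 0) := by
    intro i j
    rcases lt_trichotomy i j with h | rfl | h
    · simp [h, h.not_gt, h.ne]
    · simp
    · simp [h, h.not_gt, h.ne', hφ i j]
  have hswap : ∑ i, ∑ j, (if j < i then φ j i else 0) = ∑ i, ∑ j, (if i < j then φ i j else 0) :=
    sum_comm
  rw [sum_filter, Fintype.sum_prod_type]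
  conv_rhs => enter [1, 2, i, 2, j]; rw [hsplit i j]
  simp only [sum_add_distrib, hswap, sum_ite_eq, mem_univ, if_true]
  ring

theorem card_filter_lt_fin_prod (N : ℕ) :
    ((univ.filter (fun p : Fin N × Fin N => p.1 < p.2)).card : ℝ) = N * (N - 1) / 2 := by
  have h := two_mul_sum_filter_lt_of_symm (fun (_ _ : Fin N) => (1 : ℝ)) (fun _ _ => rfl)
  simp only [sum_const, card_univ, Fintype.card_fin, nsmul_eq_mul, mul_one] at h
  linear_combination h / 2

theorem sum_filter_lt_quartic {N : ℕ} (x : Fin N → ℝ) :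
    ∑ p ∈ univ.filter (fun p : Fin N × Fin N => p.1 < p.2),
        (6 * x p.1 ^ 2 * x p.2 ^ 2 - x p.1 ^ 4 - x p.2 ^ 4)
      = 3 * (∑ i, x i ^ 2) ^ 2 - (N + 2) * ∑ i, x i ^ 4 := by
  have h := two_mul_sum_filter_lt_of_symm (fun i j => 6 * x i ^ 2 * x j ^ 2 - x i ^ 4 - x j ^ 4)
    (fun i j => by ring)
  have hdiag : ∀ i, 6 * x i ^ 2 * x i ^ 2 - x i ^ 4 - x i ^ 4 = 4 * x i ^ 4 := fun i => by ring
  simp only [hdiag, sum_sub_distrib, ← mul_sum, ← sum_mul, sum_const, card_univ, Fintype.card_fin,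
    nsmul_eq_mul, sq (∑ i, x i ^ 2)] at h ⊢
  linear_combination h / 2

theorem sum_apply_kacRot {N : ℕ} (f : ℝ → ℝ) (v : EuclideanSpace ℝ (Fin N)) {i j : Fin N}
    (hij : i ≠ j) (θ : ℝ) :
    ∑ m, f (kacRot N i j θ v m)
      = ∑ m, f (v m) - f (v i) - f (v j) + f (cos θ * v i - sin θ * v j)
        + f (sin θ * v i + cos θ * v j) := by
  have hpt : ∀ m, f (kacRot N i j θ v m) = f (v m)
      + (if m = i then f (cos θ * v i - sin θ * v j) - f (v i) else 0)
      + (if m = j then f (sin θ * v i + cos θ * v j) - f (v j) else 0) := by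
    intro m
    by_cases hi : m = i
    · subst hi; simp [kacRot, hij]
    · by_cases hj : m = j
      · subst hj; simp [kacRot, hi]
      · simp [kacRot, hi, hj]
  simp only [hpt, sum_add_distrib, sum_ite_eq', mem_univ, if_true]
  ring

noncomputable def quarticObservable (N : ℕ) (c : ℝ) (w : EuclideanSpace ℝ (Fin N)) : ℝ :=
  ∑ m, (w m ^ 4 - c)

theorem integral_mul_quarticObservable_kacRot {N : ℕ} {ρ : ℝ → ℝ} (hρ : Function.Even ρ)
    (hρ1 : ∫ θ in -π..π, ρ θ = 1) (c : ℝ) (v : EuclideanSpace ℝ (Fin N)) {i j : Fin N}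
    (hij : i ≠ j) :
    ∫ θ in -π..π, ρ θ * quarticObservable N c (kacRot N i j θ v)
      = quarticObservable N c v
        + (∫ θ in -π..π, (1 - cos (4 * θ)) * ρ θ) / 4
          * (6 * v i ^ 2 * v j ^ 2 - v i ^ 4 - v j ^ 4) := by
  have hρπ : IntervalIntegrable ρ volume (-π) π :=
    intervalIntegral.intervalIntegrable_of_integral_ne_zero (by simp [hρ1])
  have hpt : ∀ θ, ρ θ * quarticObservable N c (kacRot N i j θ v)
      = (quarticObservable N c v - v i ^ 4 - v j ^ 4) * ρ θ
        + ρ θ * ((cos θ * v i - sin θ * v j) ^ 4 + (sin θ * v i + cos θ * v j) ^ 4) := by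
    intro θ
    rw [quarticObservable, quarticObservable, sum_apply_kacRot (fun t => t ^ 4 - c) v hij θ]
    ring
  simp_rw [hpt]
  rw [intervalIntegral.integral_add (hρπ.const_mul _) (hρπ.mul_continuousOn (by fun_prop)),
    intervalIntegral.integral_const_mul, integral_mul_rotation_pow_four_add_pow_four hρ hρπ, hρ1]
  ring

theorem kacQrho_quarticObservable {N : ℕ} (hN : 2 ≤ N) {ρ : ℝ → ℝ} (hρ : Function.Even ρ)
    (hρ1 : ∫ θ in -π..π, ρ θ = 1) (c : ℝ) (v : EuclideanSpace ℝ (Fin N)) :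
    kacQrho N ρ (quarticObservable N c) v
      = quarticObservable N c v
        + (∫ θ in -π..π, (1 - cos (4 * θ)) * ρ θ) / 4
          * (3 * (∑ m, v m ^ 2) ^ 2 - (N + 2) * ∑ m, v m ^ 4) / (N * (N - 1) / 2) := by
  have hN1 : (N : ℝ) - 1 ≠ 0 := by
    have : (2 : ℝ) ≤ N := by exact_mod_cast hN
    linarith
  rw [kacQrho, sum_congr rfl fun p hp =>
      integral_mul_quarticObservable_kacRot hρ hρ1 c v (mem_filter.mp hp).2.ne,
    sum_add_distrib, ← mul_sum, sum_filter_lt_quartic, sum_const, nsmul_eq_mul,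
    card_filter_lt_fin_prod, Nat.cast_choose_two]
  field_simp

theorem kac_quarticObservable_eigen {N : ℕ} (hN : 2 ≤ N) {ρ : ℝ → ℝ} (hρ : Function.Even ρ)
    (hρ1 : ∫ θ in -π..π, ρ θ = 1) {v : EuclideanSpace ℝ (Fin N)} (hv : ∑ m, v m ^ 2 = N) :
    N * (quarticObservable N (3 * N / (N + 2)) v
        - kacQrho N ρ (quarticObservable N (3 * N / (N + 2))) v)
      = 1 / 4 * ((N + 2) / (N - 1)) * (2 * ∫ θ in -π..π, (1 - cos (4 * θ)) * ρ θ)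
        * quarticObservable N (3 * N / (N + 2)) v := by
  have hN1 : (N : ℝ) - 1 ≠ 0 := by
    have : (2 : ℝ) ≤ N := by exact_mod_cast hN
    linarith
  have hN2 : (N : ℝ) + 2 ≠ 0 := by positivity
  rw [kacQrho_quarticObservable hN hρ hρ1, hv, quarticObservable]
  simp only [sum_sub_distrib, sum_const, card_univ, Fintype.card_fin, nsmul_eq_mul]
  field_simp
  ring

theorem EuclideanSpace.sum_sq_eq_of_mem_sphere {ι : Type*} [Fintype ι]
    {x : EuclideanSpace ℝ ι} {r : ℝ} (hx : x ∈ Metric.sphere 0 r) : ∑ i, x i ^ 2 = r ^ 2 := by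
  rw [← EuclideanSpace.real_norm_sq_eq, mem_sphere_zero_iff_norm.mp hx]

theorem le_of_ae_eigenfunction {α : Type*} [MeasurableSpace α] {μ : Measure α} {G LG : α → ℝ}
    {Δ Γ : ℝ} (hgap : Δ * ∫ v, G v ^ 2 ∂μ ≤ ∫ v, G v * LG v ∂μ)
    (hLG : ∀ᵐ v ∂μ, LG v = Γ * G v) (hG : 0 < ∫ v, G v ^ 2 ∂μ) : Δ ≤ Γ := by
  have hquad : ∫ v, G v * LG v ∂μ = Γ * ∫ v, G v ^ 2 ∂μ := by
    rw [← integral_const_mul]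
    exact integral_congr_ae (hLG.mono fun v hv => by simp only [hv]; ring)
  exact le_of_mul_le_mul_right (hquad ▸ hgap) hG

theorem kac_general_rho_eigenvalue_general (N : ℕ) (hN : 2 ≤ N)
    (ρ : ℝ → ℝ) (hρeven : ∀ θ, ρ (-θ) = ρ θ)
    (hρint : (∫ θ in (-Real.pi)..Real.pi, ρ θ) = 1)
    (F : EuclideanSpace ℝ (Fin N) → ℝ)
    (hF : F = fun w => ∑ j, ((w j) ^ 4 - 3 * (N : ℝ) / ((N : ℝ) + 2)))
    (Γ₂ ΓN : ℝ)
    (hΓ₂ : Γ₂ = 2 * ∫ θ in (-Real.pi)..Real.pi, (1 - Real.cos (4 * θ)) * ρ θ)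
    (hΓN : ΓN = (1 / 4) * (((N : ℝ) + 2) / ((N : ℝ) - 1)) * Γ₂)
    -- the uniform probability measure on the sphere `S^{N-1}(√N)`:
    (σ : Measure (EuclideanSpace ℝ (Fin N)))
    (hsupp : σ (Metric.sphere (0 : EuclideanSpace ℝ (Fin N)) (Real.sqrt N))ᶜ = 0)
    -- `Δ` is a spectral-gap lower bound for `L_N = N(I - Q_N)` in `L²(σ)`:
    (Δ : ℝ)
    (hΔ : ∀ G : EuclideanSpace ℝ (Fin N) → ℝ, (∫ v, G v ∂σ) = 0 →
      Δ * ∫ v, (G v) ^ 2 ∂σ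
        ≤ ∫ v, G v * ((N : ℝ) * (G v - kacQrho N ρ G v)) ∂σ)
    -- normalization facts for `F` (true for the uniform sphere measure):
    (hF0 : ∫ v, F v ∂σ = 0) (hF2 : 0 < ∫ v, (F v) ^ 2 ∂σ) :
    (∀ v : EuclideanSpace ℝ (Fin N), (∑ j, (v j) ^ 2 = (N : ℝ)) →
      (N : ℝ) * (F v - kacQrho N ρ F v) = ΓN * F v) ∧
    Δ ≤ ΓN := by
  have heigen : ∀ v : EuclideanSpace ℝ (Fin N), ∑ j, v j ^ 2 = (N : ℝ) →
      (N : ℝ) * (F v - kacQrho N ρ F v) = ΓN * F v := by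
    intro v hv
    subst hF hΓN hΓ₂
    exact kac_quarticObservable_eigen hN hρeven hρint hv
  refine ⟨heigen, le_of_ae_eigenfunction (hΔ F hF0) ?_ hF2⟩
  filter_upwards [mem_ae_iff.mpr hsupp] with v hv
  exact heigen v <| by
    rw [EuclideanSpace.sum_sq_eq_of_mem_sphere hv, Real.sq_sqrt N.cast_nonneg]

/-- For any even scattering probability density `ρ`, the function
`F(v) = Σ_j (v_j⁴ - 3N/(N+2))` is an eigenfunction of `L_N = N(I - Q_N)` with eigenvalue
`Γ_N = (1/4)(N+2)/(N-1)·Γ₂`, `Γ₂ = 2∫(1-cos 4θ)ρ(θ)dθ`; in particular the spectral gap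
`Δ_N` satisfies `Δ_N ≤ Γ_N`. -/
theorem kac_general_rho_eigenvalue (N : ℕ) (hN : 2 ≤ N)
    (ρ : ℝ → ℝ) (hρeven : ∀ θ, ρ (-θ) = ρ θ) (hρpos : ∀ θ, 0 ≤ ρ θ)
    (hρint : (∫ θ in (-Real.pi)..Real.pi, ρ θ) = 1)
    (F : EuclideanSpace ℝ (Fin N) → ℝ)
    (hF : F = fun w => ∑ j, ((w j) ^ 4 - 3 * (N : ℝ) / ((N : ℝ) + 2)))
    (Γ₂ ΓN : ℝ)
    (hΓ₂ : Γ₂ = 2 * ∫ θ in (-Real.pi)..Real.pi, (1 - Real.cos (4 * θ)) * ρ θ)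
    (hΓN : ΓN = (1 / 4) * (((N : ℝ) + 2) / ((N : ℝ) - 1)) * Γ₂)
    -- the uniform probability measure on the sphere `S^{N-1}(√N)`:
    (σ : Measure (EuclideanSpace ℝ (Fin N)))
    (hprob : IsProbabilityMeasure σ)
    (hsupp : σ (Metric.sphere (0 : EuclideanSpace ℝ (Fin N)) (Real.sqrt N))ᶜ = 0)
    (hinv : ∀ g : EuclideanSpace ℝ (Fin N) ≃ₗᵢ[ℝ] EuclideanSpace ℝ (Fin N),
      Measure.map g σ = σ)
    -- `Δ` is a spectral-gap lower bound for `L_N = N(I - Q_N)` in `L²(σ)`: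
    (Δ : ℝ)
    (hΔ : ∀ G : EuclideanSpace ℝ (Fin N) → ℝ, (∫ v, G v ∂σ) = 0 →
      Δ * ∫ v, (G v) ^ 2 ∂σ
        ≤ ∫ v, G v * ((N : ℝ) * (G v - kacQrho N ρ G v)) ∂σ)
    -- normalization facts for `F` (true for the uniform sphere measure):
    (hF0 : ∫ v, F v ∂σ = 0) (hF2 : 0 < ∫ v, (F v) ^ 2 ∂σ) :
    (∀ v : EuclideanSpace ℝ (Fin N), (∑ j, (v j) ^ 2 = (N : ℝ)) →
      (N : ℝ) * (F v - kacQrho N ρ F v) = ΓN * F v) ∧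
    Δ ≤ ΓN :=
  kac_general_rho_eigenvalue_general N hN ρ hρeven hρint F hF Γ₂ ΓN hΓ₂ hΓN σ hsupp Δ hΔ hF0 hF2
end
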